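/- Let d = (d_1, …, d_m) be positive integers ordered so that j divides d_1, …, d_{k_j} and j does not divide d_{k_j+1}, …, d_m, where j ≥ 1 and k_j = #{i : j | d_i} ≥ 1. Then the j-th Sylvester wave satisfies W_j(s, d) = (1/((m−1)! · π_m · j^{m−k_j})) · ∑_{r ∈ {0,…,j−1}^{m−k_j}} B_{m−1}^{(m)}(s + s_m + ∑_{i=k_j+1}^m d_i r_i | d_j) · Ψ̄_j(s + ∑_{i=k_j+1}^m d_i (r_i + 1)), where s_m = d_1 + ⋯ + d_m and π_m = d_1 ⋯ d_m. -/

import Mathlib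

open PowerSeries Finset

noncomputable section

/-- Restricted partition function `W(s, d)`: the number of tuples `x` of nonnegative
integers with `∑ i, x i * d i = s`. -/
def restrictedPartition (s : ℕ) (d : List ℕ) : ℕ :=
  Set.ncard {x : Fin d.length → ℕ | ∑ i, x i * d.get i = s}

/-- `(e^{dt} - 1)/(d t)` as a formal power series. -/
def bexpS (d : ℂ) : PowerSeries ℂ :=
  PowerSeries.mk fun k => d ^ k / (Nat.factorial (k + 1) : ℂ)

/-- Nörlund Bernoulli polynomial of higher order `B_n^{(m)}(x | d)`, defined through
the generating function `e^{xt} ∏ d_i t/(e^{d_i t} - 1) = ∑ B_n^{(m)}(x|d) t^n/n!`. -/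
def NBern (n : ℕ) (x : ℂ) (d : List ℂ) : ℂ :=
  (Nat.factorial n : ℂ) *
    PowerSeries.coeff n
      (PowerSeries.rescale x (PowerSeries.exp ℂ) * ((d.map fun di => (bexpS di)⁻¹).prod))

/-- `e^{et} - ρ^e` as a formal power series. -/
def frobS (ρ : ℂ) (e : ℕ) : PowerSeries ℂ :=
  PowerSeries.mk fun k => if k = 0 then 1 - ρ ^ e else (e : ℂ) ^ k / (Nat.factorial k : ℂ)

/-- Higher-order Eulerian (Frobenius) polynomial `H_n^{(q)}(x, ρ | e)`, defined through
the generating function `e^{xt} ∏ (1 - ρ^{e_i})/(e^{e_i t} - ρ^{e_i}) = ∑ H_n t^n/n!`. -/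
def FrobH (n : ℕ) (x ρ : ℂ) (e : List ℕ) : ℂ :=
  (Nat.factorial n : ℂ) *
    PowerSeries.coeff n
      (PowerSeries.rescale x (PowerSeries.exp ℂ) *
        ((e.map fun ei => PowerSeries.C (1 - ρ ^ ei) * (frobS ρ ei)⁻¹).prod))

/-- `k_j`, the number of elements of `d` divisible by `j`. -/
def kWeight (j : ℕ) (d : List ℕ) : ℕ := (d.filter fun di => j ∣ di).length

/-- The unit part of the factor `1 - ρ^d e^{-dt}`: if `ρ^d = 1` this factor equals
`t` times the series below, otherwise it equals the series below itself. -/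
def sylFactor (ρ : ℂ) (d : ℕ) : PowerSeries ℂ :=
  if ρ ^ d = 1 then
    PowerSeries.mk fun k => (d : ℂ) * (-(d : ℂ)) ^ k / (Nat.factorial (k + 1) : ℂ)
  else
    PowerSeries.mk fun k =>
      if k = 0 then 1 - ρ ^ d else -ρ ^ d * (-(d : ℂ)) ^ k / (Nat.factorial k : ℂ)

/-- The Sylvester wave `W_j(s, d)`: sum over primitive `j`-th roots of unity `ρ` of the
coefficient of `t^{k_j - 1}` in `t^{k_j} ρ^{-s} e^{st} / ∏ (1 - ρ^{d_i} e^{-d_i t})`. -/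
def SylvesterWave (j : ℕ) (s : ℕ) (d : List ℕ) : ℂ :=
  ∑ ρ ∈ primitiveRoots j ℂ,
    PowerSeries.coeff (kWeight j d - 1)
      ((ρ ^ s)⁻¹ • (PowerSeries.rescale (s : ℂ) (PowerSeries.exp ℂ) *
        ((d.map (sylFactor ρ)).prod)⁻¹))

/-- The prime radical circulator (Ramanujan sum) `Ψ̄_j(s) = ∑_ρ ρ^s` over primitive
`j`-th roots of unity. -/
def primeCirculator (j : ℕ) (s : ℤ) : ℂ :=
  ∑ ρ ∈ primitiveRoots j ℂ, ρ ^ s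

local notation "E" => fun (a : ℂ) => PowerSeries.rescale a (PowerSeries.exp ℂ)

lemma coeff_E (a : ℂ) (n : ℕ) : PowerSeries.coeff n (E a) = a ^ n / (n.factorial : ℂ) := by
  rw [coeff_rescale, coeff_exp]
  simp [eq_ratCast, div_eq_mul_inv]

lemma E_mul_E (a b : ℂ) : E a * E b = E (a + b) := exp_mul_exp_eq_exp_add a b

lemma E_zero : E 0 = 1 := by
  show rescale (0:ℂ) (exp ℂ) = 1
  rw [rescale_zero]; simp

lemma constantCoeff_E (a : ℂ) : constantCoeff (E a) = 1 := by
  rw [← coeff_zero_eq_constantCoeff_apply, coeff_E]; simp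

lemma X_mul_sylFactor (ρ : ℂ) (e : ℕ) (h : ρ ^ e = 1) :
    X * sylFactor ρ e = 1 - E (-(e : ℂ)) := by
  rw [sylFactor, if_pos h]
  ext n
  match n with
  | 0 => simp [constantCoeff_E]
  | Nat.succ n =>
      rw [coeff_succ_X_mul]
      simp only [coeff_mk, map_sub, coeff_E, coeff_one, Nat.succ_ne_zero, if_false]
      rw [pow_succ']
      field_simp
      ring

lemma sylFactor_of_ne (ρ : ℂ) (e : ℕ) (h : ρ ^ e ≠ 1) :
    sylFactor ρ e = 1 - PowerSeries.C (ρ ^ e) * E (-(e : ℂ)) := by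
  rw [sylFactor, if_neg h]
  ext n
  match n with
  | 0 => simp [constantCoeff_E]
  | Nat.succ n =>
      simp only [coeff_mk, map_sub, coeff_one, Nat.succ_ne_zero, if_false, coeff_C_mul, coeff_E]
      field_simp
      ring

lemma X_mul_C_mul_bexpS (e : ℂ) :
    X * (PowerSeries.C e * bexpS e) = E e - 1 := by
  ext n
  match n with
  | 0 => simp [constantCoeff_E]
  | Nat.succ n =>
      rw [coeff_succ_X_mul]
      simp only [coeff_C_mul, bexpS, coeff_mk, map_sub, coeff_E, coeff_one, Nat.succ_ne_zero,
        if_false, sub_zero]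
      rw [pow_succ']
      field_simp

lemma sylFactor_of_eq (ρ : ℂ) (e : ℕ) (h : ρ ^ e = 1) :
    sylFactor ρ e = PowerSeries.C (e : ℂ) * E (-(e : ℂ)) * bexpS (e : ℂ) := by
  have hX : (X : PowerSeries ℂ) ≠ 0 := X_ne_zero
  apply mul_left_cancel₀ hX
  rw [X_mul_sylFactor ρ e h]
  have : X * (PowerSeries.C (e:ℂ) * E (-(e : ℂ)) * bexpS (e:ℂ))
      = (E (e:ℂ) - 1) * E (-(e:ℂ)) := by
    rw [← X_mul_C_mul_bexpS (e:ℂ)]; ring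
  rw [this, sub_mul, E_mul_E, add_neg_cancel, E_zero, one_mul]


lemma E_pow (a : ℂ) (n : ℕ) : (E a) ^ n = E ((n : ℂ) * a) := by
  show (rescale a (exp ℂ)) ^ n = _
  rw [← map_pow, exp_pow_eq_rescale_exp, rescale_rescale]

lemma constantCoeff_bexpS (e : ℂ) : constantCoeff (bexpS e) = 1 := by
  rw [← coeff_zero_eq_constantCoeff_apply]
  simp [bexpS]

lemma bexpS_mul_inv (e : ℂ) : bexpS e * (bexpS e)⁻¹ = 1 :=
  PowerSeries.mul_inv_cancel _ (by rw [constantCoeff_bexpS]; exact one_ne_zero)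

lemma sylFactor_mul_geom (ρ : ℂ) (e j : ℕ) (h : ρ ^ e ≠ 1) (hj : ρ ^ j = 1) :
    sylFactor ρ e * (∑ r ∈ range j, (PowerSeries.C (ρ ^ e) * E (-(e : ℂ))) ^ r)
      = X * sylFactor ρ (j * e) := by
  have hje : ρ ^ (j * e) = 1 := by rw [pow_mul, hj, one_pow]
  have hu : (PowerSeries.C (ρ ^ e) * E (-(e : ℂ))) ^ j = E (-((j * e : ℕ) : ℂ)) := by
    rw [mul_pow, ← map_pow, ← pow_mul, mul_comm e j, hje, map_one, one_mul, E_pow]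
    push_cast; ring_nf
  rw [X_mul_sylFactor ρ (j * e) hje, sylFactor_of_ne ρ e h, ← hu]
  have := geom_sum_mul (PowerSeries.C (ρ ^ e) * E (-(e : ℂ))) j
  linear_combination -this

/-- Inverse of a product of "unit branch" sylvester factors. -/
lemma prod_sylFactor_mul (ρ : ℂ) (L : List ℕ) (hL : ∀ e ∈ L, 0 < e ∧ ρ ^ e = 1) :
    ((L.map (sylFactor ρ)).prod) *
      (PowerSeries.C (((L.prod : ℕ) : ℂ))⁻¹ * E ((L.sum : ℕ) : ℂ) *
        (L.map fun e : ℕ => (bexpS (e : ℂ))⁻¹).prod) = 1 := by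
  induction L with
  | nil => simp [E_zero]
  | cons e L ih =>
      obtain ⟨he, hre⟩ := hL e (List.mem_cons_self (a := e) (l := L))
      have ih' := ih fun x hx => hL x (List.mem_cons_of_mem _ hx)
      have hC : PowerSeries.C (e : ℂ) * PowerSeries.C (((e * L.prod : ℕ) : ℂ))⁻¹
          = PowerSeries.C (((L.prod : ℕ) : ℂ))⁻¹ := by
        rw [← map_mul]
        congr 1
        push_cast
        rw [mul_inv]
        rw [← mul_assoc, mul_inv_cancel₀ (by exact_mod_cast he.ne' : (e : ℂ) ≠ 0), one_mul]
      have hE : E (-(e : ℂ)) * E (((e + L.sum : ℕ) : ℂ)) = E (((L.sum : ℕ)) : ℂ) := by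
        rw [E_mul_E]; push_cast; ring_nf
      calc ((e :: L).map (sylFactor ρ)).prod *
            (PowerSeries.C ((((e :: L).prod : ℕ)) : ℂ)⁻¹ * E (((e :: L).sum : ℕ) : ℂ) *
              ((e :: L).map fun x : ℕ => (bexpS (x : ℂ))⁻¹).prod)
          = (bexpS (e : ℂ) * (bexpS (e : ℂ))⁻¹) *
              ((PowerSeries.C (e : ℂ) * PowerSeries.C (((e * L.prod : ℕ) : ℂ))⁻¹) *
                ((E (-(e : ℂ)) * E (((e + L.sum : ℕ) : ℂ))) *
                  ((L.map (sylFactor ρ)).prod * ((L.map fun x : ℕ => (bexpS (x : ℂ))⁻¹).prod)))) := by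
            rw [List.map_cons, List.prod_cons, List.map_cons, List.prod_cons, List.prod_cons,
              List.sum_cons, sylFactor_of_eq ρ e hre]
            ring
        _ = 1 := by
            rw [bexpS_mul_inv, one_mul, hC, hE]
            linear_combination ih'


lemma constantCoeff_sylFactor_ne_zero (ρ : ℂ) (e : ℕ) (he : 0 < e) :
    constantCoeff (sylFactor ρ e) ≠ 0 := by
  have he' : (e : ℂ) ≠ 0 := Nat.cast_ne_zero.mpr he.ne'
  rw [sylFactor]
  split_ifs with h
  · rw [← coeff_zero_eq_constantCoeff_apply, coeff_mk]
    norm_num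
    exact he.ne'
  · rw [← coeff_zero_eq_constantCoeff_apply, coeff_mk, if_pos rfl]
    exact sub_ne_zero.mpr (Ne.symm h)

lemma E_prod {ι : Type*} (s : Finset ι) (f : ι → ℂ) :
    ∏ i ∈ s, E (f i) = E (∑ i ∈ s, f i) := by
  classical
  induction s using Finset.induction_on with
  | empty => simp [E_zero]
  | insert _ _ hx ih => rename_i a t
                        rw [Finset.prod_insert hx, Finset.sum_insert hx, ih, E_mul_E]

lemma sum_map_mul_left_nat (j : ℕ) (l : List ℕ) :
    (l.map fun x => j * x).sum = j * l.sum := by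
  induction l with
  | nil => simp
  | cons a t ih => simp [ih, Nat.mul_add]

lemma prod_map_mul_left_nat (j : ℕ) (l : List ℕ) :
    (l.map fun x => j * x).prod = j ^ l.length * l.prod := by
  induction l with
  | nil => simp
  | cons a t ih => simp [ih, pow_succ]; ring

lemma listCastEq (l : List ℕ) :
    (l.map fun di => (di : ℂ)) = l.map (fun di : ℕ => (di : ℂ)) := by
  induction l with
  | nil => rfl
  | cons a t ih => simpa using ih

lemma circ_neg (j : ℕ) (hj : 0 < j) (n : ℤ) :
    ∑ ρ ∈ primitiveRoots j ℂ, ρ ^ (-n) = primeCirculator j n := by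
  rw [primeCirculator]
  refine Finset.sum_bij' (fun ρ _ => ρ⁻¹) (fun ρ _ => ρ⁻¹) ?_ ?_ ?_ ?_ ?_
  · intro a ha
    rw [mem_primitiveRoots hj] at ha ⊢
    exact ha.inv
  · intro a ha
    rw [mem_primitiveRoots hj] at ha ⊢
    exact ha.inv
  · intro a _; simp
  · intro a _; simp
  · intro a _; rw [inv_zpow, ← zpow_neg]

/-- explicit formula for the `j`-th Sylvester wave through Bernoulli
polynomials of higher order evaluated at the `j`-modified set `d1 ++ j•d2`. -/
theorem sylvester_wave_explicit (j : ℕ) (hj : 1 ≤ j) (d1 d2 : List ℕ)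
    (hk : 1 ≤ d1.length)
    (h1 : ∀ x ∈ d1, 0 < x ∧ j ∣ x) (h2 : ∀ x ∈ d2, 0 < x ∧ ¬ j ∣ x) (s : ℕ) :
    SylvesterWave j s (d1 ++ d2) =
      ((Nat.factorial (d1.length + d2.length - 1) : ℂ) *
          ((d1.prod * d2.prod : ℕ) : ℂ) * (j : ℂ) ^ d2.length)⁻¹ *
        ∑ r : Fin d2.length → Fin j,
          NBern (d1.length + d2.length - 1)
              ((s : ℂ) + ((d1.sum + d2.sum : ℕ) : ℂ) +
                ((∑ i, d2.get i * (r i : ℕ) : ℕ) : ℂ))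
              ((d1 ++ d2.map fun di => j * di).map fun di => (di : ℂ)) *
            primeCirculator j ((s : ℤ) + ∑ i, (d2.get i : ℤ) * ((r i : ℕ) + 1)) := by
  have hj0 : 0 < j := hj
  -- notations
  set m2 := d2.length with hm2
  set dj : List ℕ := d1 ++ d2.map fun di => j * di with hdj
  have hkW : kWeight j (d1 ++ d2) = d1.length := by
    rw [kWeight, List.filter_append]
    rw [List.filter_eq_self.mpr fun a ha => by simpa using (h1 a ha).2,
      List.filter_eq_nil_iff.mpr fun a ha => by simpa using (h2 a ha).2,
      List.append_nil]
  -- basic positivity facts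
  have hπc : ((dj.prod : ℕ) : ℂ) ≠ 0 := by
    rw [Nat.cast_ne_zero]
    refine List.prod_ne_zero fun h0 => ?_
    rw [hdj] at h0
    rcases List.mem_append.mp h0 with h | h
    · exact (h1 0 h).1.ne rfl
    · obtain ⟨x, hx, hx0⟩ := List.mem_map.mp h
      rcases Nat.mul_eq_zero.mp hx0 with h' | h'
      · exact hj0.ne' h'
      · exact (h2 x hx).1.ne' h'
  -- Step A : per primitive root coefficient formula
  have stepA : ∀ ρ ∈ primitiveRoots j ℂ,
      PowerSeries.coeff (d1.length - 1)
        ((ρ ^ s)⁻¹ • (E (s : ℂ) * (((d1 ++ d2).map (sylFactor ρ)).prod)⁻¹)) =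
      ∑ r : Fin m2 → Fin j,
        (ρ ^ s)⁻¹ * ρ ^ (∑ i, d2.get i * (r i : ℕ)) *
          (((dj.prod : ℕ) : ℂ)⁻¹ * ((Nat.factorial (d1.length + m2 - 1) : ℂ))⁻¹ *
            NBern (d1.length + m2 - 1)
              ((s : ℂ) - ((∑ i, d2.get i * (r i : ℕ) : ℕ) : ℂ) + ((dj.sum : ℕ) : ℂ))
              (dj.map fun di : ℕ => (di : ℂ))) := by
    intro ρ hρmem
    have hρ : IsPrimitiveRoot ρ j := (mem_primitiveRoots hj0).mp hρmem
    have hρj : ρ ^ j = 1 := hρ.pow_eq_one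
    have hne : ∀ e ∈ d2, ρ ^ e ≠ 1 := fun e he hcon =>
      (h2 e he).2 ((hρ.pow_eq_one_iff_dvd e).mp hcon)
    set G : ℕ → PowerSeries ℂ :=
      fun e => ∑ r ∈ range j, (PowerSeries.C (ρ ^ e) * E (-(e : ℂ))) ^ r with hG
    set S : PowerSeries ℂ := (d2.map G).prod with hSdef
    set P : PowerSeries ℂ := ((d1 ++ d2).map (sylFactor ρ)).prod with hPdef
    set Q : PowerSeries ℂ := (dj.map (sylFactor ρ)).prod with hQdef
    set B : PowerSeries ℂ := (dj.map fun e : ℕ => (bexpS (e : ℂ))⁻¹).prod with hBdef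
    set R : PowerSeries ℂ :=
      PowerSeries.C (((dj.prod : ℕ) : ℂ))⁻¹ * E ((dj.sum : ℕ) : ℂ) * B with hRdef
    -- the master product identity
    have hPS : P * S = X ^ m2 * Q := by
      rw [hPdef, hQdef, hdj, List.map_append, List.map_append, List.prod_append,
        List.prod_append, List.map_map]
      have h2' : (d2.map fun e => sylFactor ρ e * G e).prod
          = (d2.map fun e => X * sylFactor ρ (j * e)).prod := by
        refine congrArg List.prod (List.map_congr_left fun e he => ?_)
        exact sylFactor_mul_geom ρ e j (hne e he) hρj
      calc (d1.map (sylFactor ρ)).prod * (d2.map (sylFactor ρ)).prod * S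
          = (d1.map (sylFactor ρ)).prod * ((d2.map fun e => sylFactor ρ e * G e).prod) := by
            rw [hSdef, List.prod_map_mul]; ring
        _ = (d1.map (sylFactor ρ)).prod * ((d2.map fun e => X * sylFactor ρ (j * e)).prod) := by
            rw [h2']
        _ = X ^ m2 * ((d1.map (sylFactor ρ)).prod *
              (d2.map ((sylFactor ρ) ∘ fun di => j * di)).prod) := by
            rw [List.prod_map_mul]
            simp only [Function.comp_def]
            rw [List.map_const', List.prod_replicate, hm2]
            ring
    have hdjpos : ∀ e ∈ dj, 0 < e ∧ ρ ^ e = 1 := by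
      intro e he
      rw [hdj] at he
      rcases List.mem_append.mp he with h | h
      · obtain ⟨hpos, c, hc⟩ := h1 e h
        exact ⟨hpos, by rw [hc, pow_mul, hρj, one_pow]⟩
      · obtain ⟨x, hx, rfl⟩ := List.mem_map.mp h
        exact ⟨Nat.mul_pos hj0 (h2 x hx).1, by rw [pow_mul, hρj, one_pow]⟩
    have hQR : Q * R = 1 := prod_sylFactor_mul ρ dj hdjpos
    have hP0 : constantCoeff P ≠ 0 := by
      rw [hPdef, map_list_prod, List.map_map]
      refine List.prod_ne_zero fun h0 => ?_
      obtain ⟨x, hx, hx0⟩ := List.mem_map.mp h0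
      have hxpos : 0 < x := by
        rcases List.mem_append.mp hx with h | h
        · exact (h1 x h).1
        · exact (h2 x h).1
      exact constantCoeff_sylFactor_ne_zero ρ x hxpos hx0
    have hPP : P * P⁻¹ = 1 := PowerSeries.mul_inv_cancel P hP0
    have hXm : X ^ m2 * (E (s : ℂ) * P⁻¹) = E (s : ℂ) * (S * R) := by
      linear_combination (-(E (s : ℂ) * P⁻¹ * R)) * hPS +
        (-(X ^ m2 * (E (s : ℂ)) * P⁻¹)) * hQR + (E (s : ℂ) * S * R) * hPP
    -- expand S as a sum over tuples
    have hS : S = ∑ r : Fin m2 → Fin j,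
        PowerSeries.C (ρ ^ (∑ i, d2.get i * (r i : ℕ))) *
          E (-(((∑ i, d2.get i * (r i : ℕ) : ℕ)) : ℂ)) := by
      rw [hSdef]
      calc (d2.map G).prod = ∏ i : Fin d2.length, G d2[i.1] :=
            (Fin.prod_univ_fun_getElem d2 G).symm
        _ = ∏ i : Fin d2.length, ∑ rr : Fin j,
              (PowerSeries.C (ρ ^ d2.get i) * E (-(d2.get i : ℂ))) ^ (rr : ℕ) := by
            refine Finset.prod_congr rfl fun i _ => ?_
            rw [hG]
            simp only [List.get_eq_getElem]
            exact (Fin.sum_univ_eq_sum_range _ j).symm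
        _ = ∑ r : Fin m2 → Fin j, ∏ i : Fin m2,
              (PowerSeries.C (ρ ^ d2.get i) * E (-(d2.get i : ℂ))) ^ ((r i : ℕ)) := by
            rw [Finset.prod_univ_sum, Fintype.piFinset_univ]
        _ = _ := by
            refine Finset.sum_congr rfl fun r _ => ?_
            have hEarg : ∑ i : Fin m2, ((r i : ℕ) : ℂ) * -((d2.get i : ℕ) : ℂ)
                = -(((∑ i, d2.get i * (r i : ℕ) : ℕ)) : ℂ) := by
              push_cast
              rw [← Finset.sum_neg_distrib]
              exact Finset.sum_congr rfl fun i _ => by ring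
            calc ∏ i : Fin m2,
                  (PowerSeries.C (ρ ^ d2.get i) * E (-(d2.get i : ℂ))) ^ ((r i : ℕ))
                = ∏ i : Fin m2, (PowerSeries.C ((ρ ^ d2.get i) ^ (r i : ℕ)) *
                    E (((r i : ℕ) : ℂ) * -(d2.get i : ℂ))) := by
                  refine Finset.prod_congr rfl fun i _ => ?_
                  rw [mul_pow, ← map_pow, E_pow]
              _ = PowerSeries.C (∏ i : Fin m2, (ρ ^ d2.get i) ^ (r i : ℕ)) *
                    E (∑ i : Fin m2, ((r i : ℕ) : ℂ) * -(d2.get i : ℂ)) := by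
                  rw [Finset.prod_mul_distrib, map_prod, E_prod]
              _ = _ := by
                  rw [hEarg]
                  congr 1
                  congr 1
                  rw [← Finset.prod_pow_eq_pow_sum]
                  exact Finset.prod_congr rfl fun i _ => by rw [← pow_mul]
    -- extract the coefficient
    have hm : d1.length + m2 - 1 = (d1.length - 1) + m2 := by omega
    have hco : PowerSeries.coeff (d1.length - 1) (E (s : ℂ) * P⁻¹)
        = PowerSeries.coeff (d1.length + m2 - 1) (E (s : ℂ) * (S * R)) := by
      rw [← hXm, hm, coeff_X_pow_mul]
    rw [map_smul, smul_eq_mul, hco, hS, Finset.sum_mul, Finset.mul_sum, map_sum,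
      Finset.mul_sum]
    refine Finset.sum_congr rfl fun r _ => ?_
    have hser : E (s : ℂ) * (PowerSeries.C (ρ ^ (∑ i, d2.get i * (r i : ℕ))) *
          E (-(((∑ i, d2.get i * (r i : ℕ) : ℕ)) : ℂ)) * R)
        = PowerSeries.C (ρ ^ (∑ i, d2.get i * (r i : ℕ)) * ((dj.prod : ℕ) : ℂ)⁻¹) *
          (E ((s : ℂ) - ((∑ i, d2.get i * (r i : ℕ) : ℕ) : ℂ) + ((dj.sum : ℕ) : ℂ)) * B) := by
      rw [hRdef, map_mul]
      calc E (s : ℂ) * (PowerSeries.C (ρ ^ (∑ i, d2.get i * (r i : ℕ))) *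
              E (-(((∑ i, d2.get i * (r i : ℕ) : ℕ)) : ℂ)) *
              (PowerSeries.C (((dj.prod : ℕ) : ℂ))⁻¹ * E ((dj.sum : ℕ) : ℂ) * B))
          = PowerSeries.C (ρ ^ (∑ i, d2.get i * (r i : ℕ))) *
              PowerSeries.C (((dj.prod : ℕ) : ℂ))⁻¹ *
              ((E (s : ℂ) * E (-(((∑ i, d2.get i * (r i : ℕ) : ℕ)) : ℂ)) *
                E ((dj.sum : ℕ) : ℂ)) * B) := by ring
        _ = _ := by
            rw [E_mul_E, E_mul_E, ← sub_eq_add_neg]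
    rw [hser, coeff_C_mul]
    have hNB : NBern (d1.length + m2 - 1)
          ((s : ℂ) - ((∑ i, d2.get i * (r i : ℕ) : ℕ) : ℂ) + ((dj.sum : ℕ) : ℂ))
          (dj.map fun di : ℕ => (di : ℂ))
        = ((d1.length + m2 - 1).factorial : ℂ) *
            PowerSeries.coeff (d1.length + m2 - 1)
              (E ((s : ℂ) - ((∑ i, d2.get i * (r i : ℕ) : ℕ) : ℂ) + ((dj.sum : ℕ) : ℂ)) * B) := by
      rw [NBern, hBdef, List.map_map]
      rfl
    have hfac : ((d1.length + m2 - 1).factorial : ℂ) ≠ 0 := by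
      exact_mod_cast (Nat.factorial_pos _).ne'
    rw [hNB]
    linear_combination (-((ρ ^ s)⁻¹ * ρ ^ (∑ i, d2.get i * (r i : ℕ)) * ((dj.prod : ℕ) : ℂ)⁻¹ *
      PowerSeries.coeff (d1.length + m2 - 1)
        (E ((s : ℂ) - ((∑ i, d2.get i * (r i : ℕ) : ℕ) : ℂ) + ((dj.sum : ℕ) : ℂ)) * B))) *
      mul_inv_cancel₀ hfac
  -- Step B : assemble the sums
  have hd2sum : ∑ i : Fin d2.length, d2.get i = d2.sum := by
    simp only [List.get_eq_getElem]
    exact Fin.sum_univ_getElem d2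
  have hdjsum : dj.sum = d1.sum + j * d2.sum := by
    rw [hdj, List.sum_append, sum_map_mul_left_nat]
  have hdjprod : dj.prod = d1.prod * (j ^ m2 * d2.prod) := by
    rw [hdj, List.prod_append, prod_map_mul_left_nat, hm2]
  rw [SylvesterWave, hkW, listCastEq]
  calc (∑ ρ ∈ primitiveRoots j ℂ,
        PowerSeries.coeff (d1.length - 1)
          ((ρ ^ s)⁻¹ • (E (s : ℂ) * (((d1 ++ d2).map (sylFactor ρ)).prod)⁻¹)))
      = ∑ ρ ∈ primitiveRoots j ℂ, ∑ r : Fin m2 → Fin j,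
          (ρ ^ s)⁻¹ * ρ ^ (∑ i, d2.get i * (r i : ℕ)) *
            (((dj.prod : ℕ) : ℂ)⁻¹ * ((Nat.factorial (d1.length + m2 - 1) : ℂ))⁻¹ *
              NBern (d1.length + m2 - 1)
                ((s : ℂ) - ((∑ i, d2.get i * (r i : ℕ) : ℕ) : ℂ) + ((dj.sum : ℕ) : ℂ))
                (dj.map fun di : ℕ => (di : ℂ))) := Finset.sum_congr rfl stepA
    _ = ∑ r : Fin m2 → Fin j, ∑ ρ ∈ primitiveRoots j ℂ,
          (ρ ^ s)⁻¹ * ρ ^ (∑ i, d2.get i * (r i : ℕ)) *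
            (((dj.prod : ℕ) : ℂ)⁻¹ * ((Nat.factorial (d1.length + m2 - 1) : ℂ))⁻¹ *
              NBern (d1.length + m2 - 1)
                ((s : ℂ) - ((∑ i, d2.get i * (r i : ℕ) : ℕ) : ℂ) + ((dj.sum : ℕ) : ℂ))
                (dj.map fun di : ℕ => (di : ℂ))) := Finset.sum_comm
    _ = ∑ r : Fin m2 → Fin j, ∑ ρ ∈ primitiveRoots j ℂ,
          (ρ ^ s)⁻¹ * ρ ^ (∑ i, d2.get i * ((r i).rev : ℕ)) *
            (((dj.prod : ℕ) : ℂ)⁻¹ * ((Nat.factorial (d1.length + m2 - 1) : ℂ))⁻¹ *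
              NBern (d1.length + m2 - 1)
                ((s : ℂ) - ((∑ i, d2.get i * ((r i).rev : ℕ) : ℕ) : ℂ) + ((dj.sum : ℕ) : ℂ))
                (dj.map fun di : ℕ => (di : ℂ))) := by
        refine (Fintype.sum_equiv (Equiv.piCongrRight fun _ : Fin m2 => Fin.revPerm)
          _ _ fun r => ?_).symm
        rfl
    _ = _ := by
        rw [Finset.mul_sum]
        refine Finset.sum_congr rfl fun r _ => ?_
        have hsum : (∑ i, d2.get i * ((r i).rev : ℕ)) +
            (∑ i, d2.get i * ((r i : ℕ) + 1)) = j * d2.sum := by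
          rw [← Finset.sum_add_distrib]
          have : ∀ i : Fin m2, d2.get i * ((r i).rev : ℕ) + d2.get i * ((r i : ℕ) + 1)
              = d2.get i * j := by
            intro i
            rw [← Nat.mul_add]
            congr 1
            have := (r i).isLt
            rw [Fin.val_rev]
            omega
          rw [Finset.sum_congr rfl fun i _ => this i, ← Finset.sum_mul, hd2sum, Nat.mul_comm]
        have hzp : ∀ ρ ∈ primitiveRoots j ℂ,
            (ρ ^ s)⁻¹ * ρ ^ (∑ i, d2.get i * ((r i).rev : ℕ))
              = ρ ^ (-((s : ℤ) + ∑ i, (d2.get i : ℤ) * ((r i : ℕ) + 1))) := by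
          intro ρ hρmem
          have hρ : IsPrimitiveRoot ρ j := (mem_primitiveRoots hj0).mp hρmem
          have hρ0 : ρ ≠ 0 := by
            intro h0
            have := hρ.pow_eq_one
            rw [h0, zero_pow hj0.ne'] at this
            exact zero_ne_one this
          have hρj : ρ ^ j = 1 := hρ.pow_eq_one
          have harg : -((s : ℤ)) + ((∑ i, d2.get i * ((r i).rev : ℕ) : ℕ) : ℤ)
              = -((s : ℤ) + ∑ i, (d2.get i : ℤ) * ((r i : ℕ) + 1))
                + ((j * d2.sum : ℕ) : ℤ) := by
            have hsumZ := congrArg (fun n : ℕ => (n : ℤ)) hsum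
            push_cast at hsumZ ⊢
            linarith
          rw [← zpow_natCast ρ (∑ i, d2.get i * ((r i).rev : ℕ)),
            ← zpow_natCast ρ s, ← zpow_neg, ← zpow_add₀ hρ0, harg, zpow_add₀ hρ0,
            zpow_natCast, pow_mul, hρj, one_pow, mul_one]
        have hx : (s : ℂ) - ((∑ i, d2.get i * ((r i).rev : ℕ) : ℕ) : ℂ) + ((dj.sum : ℕ) : ℂ)
            = (s : ℂ) + ((d1.sum + d2.sum : ℕ) : ℂ) + ((∑ i, d2.get i * (r i : ℕ) : ℕ) : ℂ) := by
          have hsumC := congrArg (fun n : ℕ => (n : ℂ)) hsum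
          have hdjsumC := congrArg (fun n : ℕ => (n : ℂ)) hdjsum
          push_cast at hsumC hdjsumC ⊢
          have hexp : ∑ i : Fin m2, (d2.get i : ℂ) * (((r i : ℕ) : ℂ) + 1)
              = (∑ i : Fin m2, (d2.get i : ℂ) * ((r i : ℕ) : ℂ)) +
                ∑ i : Fin m2, (d2.get i : ℂ) := by
            rw [← Finset.sum_add_distrib]
            exact Finset.sum_congr rfl fun i _ => by ring
          have hd2sumC := congrArg (fun n : ℕ => (n : ℂ)) hd2sum
          push_cast at hd2sumC
          rw [hexp, hd2sumC] at hsumC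
          linear_combination hdjsumC - hsumC
        rw [Finset.sum_congr rfl fun ρ hρm => by rw [hzp ρ hρm], ← Finset.sum_mul,
          circ_neg j hj0, hx]
        have hcst : ((Nat.factorial (d1.length + m2 - 1) : ℂ) *
              ((d1.prod * d2.prod : ℕ) : ℂ) * (j : ℂ) ^ m2)
            = ((dj.prod : ℕ) : ℂ) * (Nat.factorial (d1.length + m2 - 1) : ℂ) := by
          rw [hdjprod]
          push_cast
          ring
        rw [show d1.length + d2.length - 1 = d1.length + m2 - 1 from by rw [hm2]]
        rw [hcst, mul_inv]
        ring

end
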